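/- arXiv:0910.1389 — 2 statements merged into one kernel-verified Lean document; each statement's English description precedes it below -/
import Mathlib

section
/- For $S > 1/2$, the bilinear operator $B_2(u,v)_k = \sum_{k_1+k_2=k,\,k_1,k_2\neq 0} \frac{e^{i3kk_1k_2t}}{k_1k_2} u_{k_1}v_{k_2}$ satisfies $\|B_2(u,v)\|_{\dot H^{-S}} \leq c(S)\|u\|_{\dot H^{-1}}\|v\|_{\dot H^{-1}}$, where $c(S) = \left(\sum_{k\neq 0}|k|^{-2S}\right)^{1/2}$. -/
/-!
With `a k = |u k| / |k|` and `b k = |v k| / |k|`, both in `ℓ²`, every coefficient of `B₂(u, v)` is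
bounded by the convolution `∑ a k₁ b (k - k₁)`, which Cauchy–Schwarz and translation invariance
of the `ℓ²` norm bound by `‖u‖_{Ḣ⁻¹} ‖v‖_{Ḣ⁻¹}` uniformly in `k`. A bounded sequence lies in
`Ḣ^{-S}` for `S > 1/2`, with norm at most `c(S)` times its bound.
-/

open Complex

noncomputable def hnorm (s : ℝ) (u : ℤ → ℂ) : ℝ :=
  (∑' k : ℤ, |(k : ℝ)| ^ (2 * s) * ‖u k‖ ^ 2) ^ ((1 : ℝ) / 2)

noncomputable def B2 (t : ℝ) (u v : ℤ → ℂ) (k : ℤ) : ℂ :=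
  ∑' k1 : ℤ, Complex.exp (Complex.I * (3 * (k : ℂ) * (k1 : ℂ) * ((k : ℂ) - (k1 : ℂ)) * (t : ℂ)))
      / ((k1 : ℂ) * ((k : ℂ) - (k1 : ℂ))) * u k1 * v (k - k1)

theorem summable_and_tsum_mul_sub_le {G : Type*} [AddGroup G] {a b : G → ℝ}
    (ha : ∀ x, 0 ≤ a x) (hb : ∀ x, 0 ≤ b x)
    (ha2 : Summable fun x => a x ^ (2 : ℝ)) (hb2 : Summable fun x => b x ^ (2 : ℝ)) (g : G) :
    (Summable fun x => a x * b (g - x)) ∧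
      ∑' x, a x * b (g - x) ≤
        (∑' x, a x ^ (2 : ℝ)) ^ (1 / (2 : ℝ)) * (∑' x, b x ^ (2 : ℝ)) ^ (1 / (2 : ℝ)) := by
  have hb2' : Summable fun x => b (g - x) ^ (2 : ℝ) :=
    (Equiv.subLeft g).summable_iff (f := fun x => b x ^ (2 : ℝ)) |>.mpr hb2
  rw [← (Equiv.subLeft g).tsum_eq (fun x => b x ^ (2 : ℝ))]
  exact Real.summable_and_inner_le_Lp_mul_Lq_tsum_of_nonneg .two_two ha (fun x => hb _) ha2 hb2'

-- At `x = 0` both sides are junk zeros: `0 ^ (-2 : ℝ) = 0` and `y / 0 = 0`.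
theorem abs_rpow_neg_two_mul_sq (x y : ℝ) :
    |x| ^ (2 * (-1 : ℝ)) * y ^ 2 = (y / |x|) ^ (2 : ℝ) := by
  rw [show 2 * (-1 : ℝ) = -(2 : ℕ) by norm_num, Real.rpow_neg (abs_nonneg x), Real.rpow_natCast,
    Real.rpow_two, div_pow]
  ring

theorem hnorm_neg_one (u : ℤ → ℂ) :
    hnorm (-1) u = (∑' k : ℤ, (‖u k‖ / |(k : ℝ)|) ^ (2 : ℝ)) ^ (1 / (2 : ℝ)) := by
  simp only [hnorm, abs_rpow_neg_two_mul_sq]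

theorem norm_B2_summand (t : ℝ) (u v : ℤ → ℂ) (k k1 : ℤ) :
    ‖Complex.exp (Complex.I * (3 * (k : ℂ) * (k1 : ℂ) * ((k : ℂ) - (k1 : ℂ)) * (t : ℂ)))
        / ((k1 : ℂ) * ((k : ℂ) - (k1 : ℂ))) * u k1 * v (k - k1)‖ =
      ‖u k1‖ / |(k1 : ℝ)| * (‖v (k - k1)‖ / |((k - k1 : ℤ) : ℝ)|) := by
  have hphase : ‖Complex.exp (Complex.I *
      (3 * (k : ℂ) * (k1 : ℂ) * ((k : ℂ) - (k1 : ℂ)) * (t : ℂ)))‖ = 1 := by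
    rw [show Complex.I * (3 * (k : ℂ) * (k1 : ℂ) * ((k : ℂ) - (k1 : ℂ)) * (t : ℂ))
        = ((3 * (k : ℝ) * (k1 : ℝ) * ((k : ℝ) - (k1 : ℝ)) * t : ℝ) : ℂ) * Complex.I by
      push_cast; ring]
    exact Complex.norm_exp_ofReal_mul_I _
  rw [norm_mul, norm_mul, norm_div, hphase, norm_mul, ← Int.cast_sub, Complex.norm_intCast,
    Complex.norm_intCast]
  ring

theorem norm_B2_le (t : ℝ) (u v : ℤ → ℂ)
    (hu : Summable fun k : ℤ => |(k : ℝ)| ^ (2 * (-1 : ℝ)) * ‖u k‖ ^ 2)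
    (hv : Summable fun k : ℤ => |(k : ℝ)| ^ (2 * (-1 : ℝ)) * ‖v k‖ ^ 2) (k : ℤ) :
    ‖B2 t u v k‖ ≤ hnorm (-1) u * hnorm (-1) v := by
  simp only [abs_rpow_neg_two_mul_sq] at hu hv
  obtain ⟨hsum, hle⟩ := summable_and_tsum_mul_sub_le
    (fun k => div_nonneg (norm_nonneg (u k)) (abs_nonneg _))
    (fun k => div_nonneg (norm_nonneg (v k)) (abs_nonneg _)) hu hv k
  rw [hnorm_neg_one, hnorm_neg_one]
  refine (norm_tsum_le_tsum_norm ?_).trans ?_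
  · simpa only [norm_B2_summand] using hsum
  · simpa only [norm_B2_summand] using hle

theorem hnorm_le_of_forall_norm_le {S : ℝ} (hS : 1 / 2 < S) {w : ℤ → ℂ} {M : ℝ}
    (hw : ∀ k, ‖w k‖ ≤ M) :
    hnorm (-S) w ≤ (∑' k : ℤ, |(k : ℝ)| ^ (-(2 * S))) ^ ((1 : ℝ) / 2) * M := by
  have hM : 0 ≤ M := (norm_nonneg _).trans (hw 0)
  have hweight : Summable fun k : ℤ => |(k : ℝ)| ^ (-(2 * S)) :=
    Real.summable_abs_int_rpow (by linarith)
  have hterm : ∀ k : ℤ, |(k : ℝ)| ^ (2 * -S) * ‖w k‖ ^ 2 ≤ |(k : ℝ)| ^ (-(2 * S)) * M ^ 2 :=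
    fun k => by
      rw [mul_neg]
      gcongr
      exact hw k
  have hsum : ∑' k : ℤ, |(k : ℝ)| ^ (2 * -S) * ‖w k‖ ^ 2 ≤
      (∑' k : ℤ, |(k : ℝ)| ^ (-(2 * S))) * M ^ 2 := by
    rw [← tsum_mul_right]
    exact Summable.tsum_le_tsum hterm
      ((hweight.mul_right _).of_nonneg_of_le (fun k => by positivity) hterm) (hweight.mul_right _)
  calc hnorm (-S) w ≤ ((∑' k : ℤ, |(k : ℝ)| ^ (-(2 * S))) * M ^ 2) ^ ((1 : ℝ) / 2) :=
        Real.rpow_le_rpow (tsum_nonneg fun k => by positivity) hsum (by norm_num)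
    _ = (∑' k : ℤ, |(k : ℝ)| ^ (-(2 * S))) ^ ((1 : ℝ) / 2) * M := by
        rw [Real.mul_rpow (tsum_nonneg fun k => by positivity) (by positivity),
          ← Real.sqrt_eq_rpow (M ^ 2), Real.sqrt_sq hM]

theorem B2_neg_bound_general (S : ℝ) (hS : 1 / 2 < S) (t : ℝ) (u v : ℤ → ℂ)
    (hu : Summable fun k : ℤ => |(k : ℝ)| ^ (2 * (-1 : ℝ)) * ‖u k‖ ^ 2)
    (hv : Summable fun k : ℤ => |(k : ℝ)| ^ (2 * (-1 : ℝ)) * ‖v k‖ ^ 2) :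
    hnorm (-S) (B2 t u v) ≤
      (∑' k : ℤ, |(k : ℝ)| ^ (-(2 * S))) ^ ((1 : ℝ) / 2) * hnorm (-1) u * hnorm (-1) v := by
  rw [mul_assoc]
  exact hnorm_le_of_forall_norm_le hS (norm_B2_le t u v hu hv)

theorem B2_neg_bound (S : ℝ) (hS : 1 / 2 < S) (t : ℝ) (u v : ℤ → ℂ)
    (hu0 : u 0 = 0) (hv0 : v 0 = 0)
    (hu : Summable fun k : ℤ => |(k : ℝ)| ^ (2 * (-1 : ℝ)) * ‖u k‖ ^ 2)
    (hv : Summable fun k : ℤ => |(k : ℝ)| ^ (2 * (-1 : ℝ)) * ‖v k‖ ^ 2) :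
    hnorm (-S) (B2 t u v) ≤
      (∑' k : ℤ, |(k : ℝ)| ^ (-(2 * S))) ^ ((1 : ℝ) / 2) * hnorm (-1) u * hnorm (-1) v :=
  B2_neg_bound_general S hS t u v hu hv
end

section
/- For $s \geq 0$, the resonant operator $A_{\mathrm{res}}$ defined on sequences $v \in \dot H^0$ by $A_{\mathrm{res}}(v)_k = \frac{v_k}{k}\left(\|v\|_{\dot H^0}^2 - |v_k|^2\right)$ maps $\dot H^s$ into $\dot H^{s+1}$ with $\|A_{\mathrm{res}}(v)\|_{\dot H^{s+1}} \leq \|v\|_{\dot H^0}^2 \|v\|_{\dot H^s}$. -/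
open Complex

/-- The resonant operator `A_res` of the KdV equation. -/
noncomputable def Ares (v : ℤ → ℂ) (k : ℤ) : ℂ :=
  v k / (k : ℂ) * (((hnorm 0 v) ^ 2 - ‖v k‖ ^ 2 : ℝ) : ℂ)

/-!
Since `0 ≤ |v_k|² ≤ ‖v‖²`, the factor `‖v‖² - |v_k|²` lies in `[0, ‖v‖²]`, so
`|k| |A_res(v)_k| ≤ ‖v‖² |v_k|`. One power of `|k|` is thus gained pointwise, and summing
against the weight `|k|^{2s}` gives the bound.
-/

lemma hnorm_nonneg (s : ℝ) (u : ℤ → ℂ) : 0 ≤ hnorm s u :=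
  Real.rpow_nonneg (tsum_nonneg fun _ => by positivity) _

lemma hnorm_sq (s : ℝ) (u : ℤ → ℂ) :
    hnorm s u ^ 2 = ∑' k : ℤ, |(k : ℝ)| ^ (2 * s) * ‖u k‖ ^ 2 := by
  rw [hnorm, ← Real.sqrt_eq_rpow, Real.sq_sqrt (tsum_nonneg fun _ => by positivity)]

lemma sq_norm_le_hnorm_zero_sq {v : ℤ → ℂ} (hv : Summable fun k : ℤ => ‖v k‖ ^ 2) (k : ℤ) :
    ‖v k‖ ^ 2 ≤ hnorm 0 v ^ 2 := by
  simpa [hnorm_sq] using hv.le_tsum k fun _ _ => sq_nonneg _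

lemma hnorm_add_one_le_of_abs_mul_norm_le {s C : ℝ} {u w : ℤ → ℂ} (hC : 0 ≤ C) (hw0 : w 0 = 0)
    (hu : Summable fun k : ℤ => |(k : ℝ)| ^ (2 * s) * ‖u k‖ ^ 2)
    (h : ∀ k : ℤ, |(k : ℝ)| * ‖w k‖ ≤ C * ‖u k‖) :
    hnorm (s + 1) w ≤ C * hnorm s u := by
  have hterm : ∀ k : ℤ, |(k : ℝ)| ^ (2 * (s + 1)) * ‖w k‖ ^ 2 ≤
      C ^ 2 * (|(k : ℝ)| ^ (2 * s) * ‖u k‖ ^ 2) := by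
    intro k
    rcases eq_or_ne k 0 with rfl | hk
    · rw [hw0, norm_zero, zero_pow two_ne_zero, mul_zero]
      positivity
    have hkpos : 0 < |(k : ℝ)| := abs_pos.2 (Int.cast_ne_zero.2 hk)
    calc |(k : ℝ)| ^ (2 * (s + 1)) * ‖w k‖ ^ 2
        = |(k : ℝ)| ^ (2 * s) * (|(k : ℝ)| * ‖w k‖) ^ 2 := by
          rw [mul_add, mul_one, Real.rpow_add hkpos, Real.rpow_two]; ring
      _ ≤ |(k : ℝ)| ^ (2 * s) * (C * ‖u k‖) ^ 2 := by
          gcongr _ * ?_ ^ 2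
          exact h k
      _ = C ^ 2 * (|(k : ℝ)| ^ (2 * s) * ‖u k‖ ^ 2) := by ring
  have hCu := hu.mul_left (C ^ 2)
  have hw := hCu.of_nonneg_of_le (fun _ => by positivity) hterm
  refine (pow_le_pow_iff_left₀ (hnorm_nonneg _ _) (by positivity [hnorm_nonneg s u])
    two_ne_zero).1 ?_
  rw [mul_pow, hnorm_sq, hnorm_sq, ← tsum_mul_left]
  exact hw.tsum_le_tsum hterm hCu

lemma abs_mul_norm_Ares_le {v : ℤ → ℂ} (hv : Summable fun k : ℤ => ‖v k‖ ^ 2) (k : ℤ) :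
    |(k : ℝ)| * ‖Ares v k‖ ≤ hnorm 0 v ^ 2 * ‖v k‖ := by
  have hdiv : |(k : ℝ)| * ‖v k / (k : ℂ)‖ ≤ ‖v k‖ := by
    rcases eq_or_ne k 0 with rfl | hk
    · simp
    · rw [norm_div, Complex.norm_intCast, mul_div_cancel₀ _ (by positivity)]
  have hres : |hnorm 0 v ^ 2 - ‖v k‖ ^ 2| ≤ hnorm 0 v ^ 2 :=
    abs_sub_le_of_nonneg_of_le (sq_nonneg _) le_rfl (sq_nonneg _)
      (sq_norm_le_hnorm_zero_sq hv k)
  calc |(k : ℝ)| * ‖Ares v k‖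
      = |(k : ℝ)| * ‖v k / (k : ℂ)‖ * |hnorm 0 v ^ 2 - ‖v k‖ ^ 2| := by
        rw [Ares, norm_mul, Complex.norm_real, Real.norm_eq_abs, mul_assoc]
    _ ≤ ‖v k‖ * hnorm 0 v ^ 2 := by gcongr
    _ = hnorm 0 v ^ 2 * ‖v k‖ := mul_comm _ _

theorem Ares_bound_general (s : ℝ) (v : ℤ → ℂ) (hv0 : v 0 = 0)
    (hv2 : Summable fun k : ℤ => ‖v k‖ ^ 2)
    (hvs : Summable fun k : ℤ => |(k : ℝ)| ^ (2 * s) * ‖v k‖ ^ 2) :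
    hnorm (s + 1) (Ares v) ≤ (hnorm 0 v) ^ 2 * hnorm s v :=
  hnorm_add_one_le_of_abs_mul_norm_le (sq_nonneg _) (by simp [Ares, hv0]) hvs
    (abs_mul_norm_Ares_le hv2)

theorem Ares_bound (s : ℝ) (hs : 0 ≤ s) (v : ℤ → ℂ) (hv0 : v 0 = 0)
    (hv2 : Summable fun k : ℤ => ‖v k‖ ^ 2)
    (hvs : Summable fun k : ℤ => |(k : ℝ)| ^ (2 * s) * ‖v k‖ ^ 2) :
    hnorm (s + 1) (Ares v) ≤ (hnorm 0 v) ^ 2 * hnorm s v :=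
  Ares_bound_general s v hv0 hv2 hvs
end
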